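/- Let k ≥ 0 be an integer and let q be a real number with q > 1 satisfying [2]·([4k+7] − [4k+5] − [4k+3]) = [4k+6] − [4k+4]. Define a vector δ on the vertices of H_k^p by δ(c_j) = [j+1] for 0 ≤ j ≤ 4k+3, δ(u_i) = [4k+5]/2, δ(s_i) = ([4k+6]−[4k+4])/2, and δ(t_i) = ([4k+7]−[4k+5]−[4k+3])/2 for i = 1,2. Then every entry of δ is strictly positive and A·δ = (q + q^{−1})·δ, where A is the adjacency matrix of H_k^p; thus δ is the Perron–Frobenius eigenvector of H_k^p with eigenvalue [2]. -/

import Mathlib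

/-- The vertex set of the principal graph `H_k^p`: the `4k+4` spine vertices
`c_0, …, c_{4k+3}`, then the branch vertices `u_1, u_2`, `s_1, s_2`, `t_1, t_2`. -/
abbrev EHVertex (k : ℕ) := Fin (4 * k + 4) ⊕ Fin 2 ⊕ Fin 2 ⊕ Fin 2

/-- The edge relation of `H_k^p`: `c_j — c_{j+1}`, `c_{4k+3} — u_i`, `u_i — s_i`,
`s_i — t_i`. -/
def EHedge (k : ℕ) : EHVertex k → EHVertex k → Bool
  | .inl i, .inl j => ((i : ℕ) + 1 == (j : ℕ)) || ((j : ℕ) + 1 == (i : ℕ))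
  | .inl i, .inr (.inl _) => (i : ℕ) == 4 * k + 3
  | .inr (.inl _), .inl i => (i : ℕ) == 4 * k + 3
  | .inr (.inl a), .inr (.inr (.inl b)) => a == b
  | .inr (.inr (.inl b)), .inr (.inl a) => a == b
  | .inr (.inr (.inl a)), .inr (.inr (.inr b)) => a == b
  | .inr (.inr (.inr b)), .inr (.inr (.inl a)) => a == b
  | _, _ => false

/-- The adjacency matrix of `H_k^p`. -/
def EHadj (k : ℕ) : Matrix (EHVertex k) (EHVertex k) ℝ :=
  Matrix.of fun v w => if EHedge k v w then 1 else 0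

/-!
The quantum integers satisfy `[m] + [m+2] = [2][m+1]`, which is the eigenvector equation at
every spine vertex `c_j` (with `[0] = 0` covering `c_0`). At `c_{4k+3}` the two halves
`δ(u_i) = [4k+5]/2` add up to the missing `[4k+5]`; at `u_i` and `s_i` the same recurrence closes
the equation, and at the leaves `t_i` the equation is the hypothesis on `q`. For `q > 1` the
quantum integers are positive and strictly increasing, so `δ(s_i) > 0`, and then `δ(t_i) > 0`
because `[2] δ(t_i) = δ(s_i)`.
-/

lemma sub_inv_pos_of_one_lt {q : ℝ} (hq : 1 < q) : 0 < q - q⁻¹ :=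
  sub_pos.2 ((inv_lt_one_of_one_lt₀ hq).trans hq)

noncomputable def quantumInt (q : ℝ) (m : ℕ) : ℝ := (q ^ m - (q ^ m)⁻¹) / (q - q⁻¹)

@[simp] lemma quantumInt_zero (q : ℝ) : quantumInt q 0 = 0 := by simp [quantumInt]

lemma quantumInt_one {q : ℝ} (hq : q - q⁻¹ ≠ 0) : quantumInt q 1 = 1 := by
  simp [quantumInt, div_self hq]

lemma quantumInt_add_two (q : ℝ) (m : ℕ) :
    quantumInt q m + quantumInt q (m + 2) = (q + q⁻¹) * quantumInt q (m + 1) := by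
  rcases eq_or_ne q 0 with rfl | hq
  · simp [quantumInt]
  simp only [quantumInt, ← inv_pow]
  rw [← add_div, mul_div_assoc']
  congr 1
  linear_combination (q⁻¹ ^ m - q ^ m) * mul_inv_cancel₀ hq

lemma quantumInt_two {q : ℝ} (hq : q - q⁻¹ ≠ 0) : quantumInt q 2 = q + q⁻¹ := by
  simpa [quantumInt_one hq] using quantumInt_add_two q 0

lemma quantumInt_strictMono {q : ℝ} (hq : 1 < q) : StrictMono (quantumInt q) := by
  intro m n hmn
  have hpow : q ^ m < q ^ n := pow_lt_pow_right₀ hq hmn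
  have hinv : (q ^ n)⁻¹ < (q ^ m)⁻¹ := by gcongr
  exact div_lt_div_of_pos_right (by linarith) (sub_inv_pos_of_one_lt hq)

lemma quantumInt_pos {q : ℝ} (hq : 1 < q) {m : ℕ} (hm : 0 < m) : 0 < quantumInt q m := by
  simpa using quantumInt_strictMono hq hm

lemma sum_fin_adjacent_succ {M : Type*} [AddCommMonoid M] {n : ℕ} (g : ℕ → M) (hg : g 0 = 0)
    (i : Fin n) :
    (∑ j : Fin n, if (i : ℕ) + 1 = j ∨ (j : ℕ) + 1 = i then g (j + 1) else 0) =
      g i + if (i : ℕ) + 1 < n then g (i + 2) else 0 := by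
  have hsplit : ∀ j : ℕ, (if (i : ℕ) + 1 = j ∨ j + 1 = i then g (j + 1) else 0) =
      (if j + 1 = i then g (j + 1) else 0) + if j = i + 1 then g (j + 1) else 0 := by
    intro j; split_ifs <;> first | omega | simp
  rw [Fin.sum_univ_eq_sum_range (fun j => if (i : ℕ) + 1 = j ∨ j + 1 = i then g (j + 1) else 0),
    Finset.sum_congr rfl fun j _ => hsplit j, Finset.sum_add_distrib, Finset.sum_ite_eq']
  congr 1
  · obtain ⟨i, hi⟩ := i
    cases i with
    | zero => simp [hg]
    | succ i => simp [Finset.sum_ite_eq', (by omega : i < n)]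
  · simp

namespace EHadj

variable {k : ℕ}

lemma mulVec_apply (f : EHVertex k → ℝ) (v : EHVertex k) :
    (EHadj k).mulVec f v = ∑ w, if EHedge k v w then f w else 0 := by
  simp [Matrix.mulVec, dotProduct, EHadj]

lemma mulVec_spine (f : EHVertex k → ℝ) (i : Fin (4 * k + 4)) :
    (EHadj k).mulVec f (.inl i) =
      (∑ j : Fin (4 * k + 4), if (i : ℕ) + 1 = j ∨ (j : ℕ) + 1 = i then f (.inl j) else 0) +
        if (i : ℕ) = 4 * k + 3 then f (.inr (.inl 0)) + f (.inr (.inl 1)) else 0 := by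
  simp only [mulVec_apply, EHedge, Fintype.sum_sum_type, Fin.sum_univ_two, beq_iff_eq,
    Bool.or_eq_true, Bool.false_eq_true, if_false, Finset.sum_const_zero, add_zero]
  split_ifs <;> simp

lemma mulVec_branch (f : EHVertex k → ℝ) (a : Fin 2) :
    (EHadj k).mulVec f (.inr (.inl a)) =
      f (.inl ⟨4 * k + 3, by omega⟩) + f (.inr (.inr (.inl a))) := by
  simp only [mulVec_apply, EHedge, Fintype.sum_sum_type, Fin.sum_univ_two, beq_iff_eq,
    Bool.false_eq_true, if_false, Finset.sum_const_zero, add_zero, zero_add]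
  rw [Fintype.sum_eq_single ⟨4 * k + 3, by omega⟩ fun j hj => if_neg fun h => hj (Fin.ext h)]
  fin_cases a <;> simp

lemma mulVec_middle (f : EHVertex k → ℝ) (a : Fin 2) :
    (EHadj k).mulVec f (.inr (.inr (.inl a))) = f (.inr (.inl a)) + f (.inr (.inr (.inr a))) := by
  fin_cases a <;> simp [mulVec_apply, EHedge, Fintype.sum_sum_type]

lemma mulVec_leaf (f : EHVertex k → ℝ) (a : Fin 2) :
    (EHadj k).mulVec f (.inr (.inr (.inr a))) = f (.inr (.inr (.inl a))) := by
  fin_cases a <;> simp [mulVec_apply, EHedge, Fintype.sum_sum_type]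

end EHadj

noncomputable def pfDim (k : ℕ) (q : ℝ) : EHVertex k → ℝ :=
  Sum.elim (fun j => quantumInt q ((j : ℕ) + 1)) <|
    Sum.elim (fun _ => quantumInt q (4 * k + 5) / 2) <|
      Sum.elim (fun _ => (quantumInt q (4 * k + 6) - quantumInt q (4 * k + 4)) / 2) fun _ =>
        (quantumInt q (4 * k + 7) - quantumInt q (4 * k + 5) - quantumInt q (4 * k + 3)) / 2

section pfDim

variable {k : ℕ} {q : ℝ}

lemma pfDim_pos (hq : 1 < q)
    (heigen : quantumInt q 2 * (quantumInt q (4 * k + 7) - quantumInt q (4 * k + 5) -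
      quantumInt q (4 * k + 3)) = quantumInt q (4 * k + 6) - quantumInt q (4 * k + 4))
    (v : EHVertex k) : 0 < pfDim k q v := by
  have hs : 0 < quantumInt q (4 * k + 6) - quantumInt q (4 * k + 4) :=
    sub_pos.2 (quantumInt_strictMono hq (by omega))
  rcases v with i | a | a | a
  · exact quantumInt_pos hq i.succ_pos
  · exact half_pos (quantumInt_pos hq (by omega))
  · exact half_pos hs
  · exact half_pos (pos_of_mul_pos_right (heigen ▸ hs) (quantumInt_pos hq two_pos).le)

lemma mulVec_pfDim (hq : q - q⁻¹ ≠ 0)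
    (heigen : quantumInt q 2 * (quantumInt q (4 * k + 7) - quantumInt q (4 * k + 5) -
      quantumInt q (4 * k + 3)) = quantumInt q (4 * k + 6) - quantumInt q (4 * k + 4)) :
    (EHadj k).mulVec (pfDim k q) = (q + q⁻¹) • pfDim k q := by
  rw [quantumInt_two hq] at heigen
  have hrec := quantumInt_add_two q
  funext v
  simp only [Pi.smul_apply, smul_eq_mul]
  rcases v with i | a | a | a
  · rw [EHadj.mulVec_spine]
    simp only [pfDim, Sum.elim_inl, Sum.elim_inr]
    rw [sum_fin_adjacent_succ (quantumInt q) (quantumInt_zero q)]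
    obtain ⟨i, hi⟩ := i
    rcases (by omega : i < 4 * k + 3 ∨ i = 4 * k + 3) with hlt | rfl
    · simpa [(by omega : i + 1 < 4 * k + 4), hlt.ne] using hrec i
    · simp only [lt_self_iff_false, ↓reduceIte, add_zero, add_halves]
      linarith [hrec (4 * k + 3)]
  · rw [EHadj.mulVec_branch]
    simp only [pfDim, Sum.elim_inl, Sum.elim_inr]
    linarith [hrec (4 * k + 4)]
  · rw [EHadj.mulVec_middle]
    simp only [pfDim, Sum.elim_inl, Sum.elim_inr]
    linarith [hrec (4 * k + 3), hrec (4 * k + 5)]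
  · rw [EHadj.mulVec_leaf]
    simp only [pfDim, Sum.elim_inl, Sum.elim_inr]
    linarith

end pfDim

/-- The vector of Perron–Frobenius dimensions on `H_k^p` has strictly positive entries
and is an eigenvector of the adjacency matrix with eigenvalue `q + q⁻¹ = [2]`. -/
theorem stmt_1 (k : ℕ) (q : ℝ) (hq : 1 < q)
    (qi : ℕ → ℝ) (hqi : ∀ m : ℕ, qi m = (q ^ (m : ℤ) - q ^ (-(m : ℤ))) / (q - q⁻¹))
    (heigen : qi 2 * (qi (4 * k + 7) - qi (4 * k + 5) - qi (4 * k + 3))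
        = qi (4 * k + 6) - qi (4 * k + 4))
    (δ : EHVertex k → ℝ)
    (hδ : δ = fun v => match v with
      | .inl j => qi ((j : ℕ) + 1)
      | .inr (.inl _) => qi (4 * k + 5) / 2
      | .inr (.inr (.inl _)) => (qi (4 * k + 6) - qi (4 * k + 4)) / 2
      | .inr (.inr (.inr _)) => (qi (4 * k + 7) - qi (4 * k + 5) - qi (4 * k + 3)) / 2) :
    (∀ v, 0 < δ v) ∧ (EHadj k).mulVec δ = (q + q⁻¹) • δ := by
  have hqi' : qi = quantumInt q := funext fun m => by
    rw [hqi, quantumInt, zpow_neg, zpow_natCast]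
  subst hqi'
  have hδ' : δ = pfDim k q := by
    subst hδ
    funext v
    rcases v with _ | _ | _ | _ <;> rfl
  subst hδ'
  exact ⟨pfDim_pos hq heigen, mulVec_pfDim (sub_inv_pos_of_one_lt hq).ne' heigen⟩
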